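/- arXiv:math/0503456 — 5 statements merged into one kernel-verified Lean document; each statement's English description precedes it below -/
import Mathlib

section
/- Let F be a field, let m ≥ 1 be an integer, let v, t_1, …, t_m be nonzero elements of F, and let a_1, …, a_m and b_1, …, b_{m-1} be integers. Set A = a_1 + … + a_m and B = b_1 + … + b_{m-1}. Assume that the elements t_j^2 v^{-2a_j} (1 ≤ j ≤ m) are pairwise distinct. Then Σ_{j=1}^{m} t_j^2 v^{-2a_j} ∏_{k ≤ m, k ≠ j} (1 − t_j^2 t_k^{-2} v^{2a_k − 2a_j})^{-1} ∏_{k=1}^{m-1} (1 − t_j^2 t_k^{-2} v^{2b_k − 2a_j}) = t_m^2 v^{2B − 2A}. -/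
open Finset

lemma aux_zpow_sum {F : Type*} [Field F] {v : F} (hv : v ≠ 0) {ι : Type*} (s : Finset ι)
    (f : ι → ℤ) : v ^ (∑ i ∈ s, f i) = ∏ i ∈ s, v ^ f i := by
  classical
  induction s using Finset.cons_induction with
  | empty => simp
  | cons i s hi ih => rw [Finset.sum_cons, Finset.prod_cons, zpow_add₀ hv, ih]

lemma aux_lagrange {F : Type*} [Field F] {ι : Type*} [DecidableEq ι] (s : Finset ι)
    (x : ι → F) (hinj : Set.InjOn x s) (P : Polynomial F) (hP : P.degree < s.card) :
    ∑ j ∈ s, P.eval (x j) * ∏ k ∈ s.erase j, (x j - x k)⁻¹ = P.coeff (s.card - 1) := by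
  conv_rhs => rw [Lagrange.eq_interpolate hinj hP, Lagrange.interpolate_apply]
  rw [Polynomial.finset_sum_coeff]
  refine Finset.sum_congr rfl fun j hj => ?_
  rw [Polynomial.coeff_C_mul]
  congr 1
  have hb : Lagrange.basis s x j
      = Polynomial.C (Lagrange.nodalWeight s x j) * Lagrange.nodal (s.erase j) x := by
    rw [Lagrange.basis_eq_prod_sub_inv_mul_nodal_div hj, ← Lagrange.nodal_erase_eq_nodal_div hj]
  have h1 : (Lagrange.nodal (s.erase j) x).natDegree = s.card - 1 := by
    rw [Lagrange.natDegree_nodal, Finset.card_erase_of_mem hj]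
  rw [hb, Polynomial.coeff_C_mul, ← h1, Lagrange.nodal_monic.coeff_natDegree, mul_one,
    Lagrange.nodalWeight]

/-- Fixed-point (Bott–Lefschetz) form of equation (13) ('zhelaem') in
Braverman–Finkelberg, used in the proof of Proposition 2.22 ('hlop'). Here
`m` plays the role of the index `i`, `a j = d_{i,j}`, `b k = d_{i-1,k}`,
`A = d_i`, `B = d_{i-1}`. -/
theorem stmt_2 (F : Type*) [Field F] (m : ℕ) (hm : 1 ≤ m)
    (v : F) (t : ℕ → F) (hv : v ≠ 0)
    (ht : ∀ j ∈ Finset.Icc 1 m, t j ≠ 0)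
    (a b : ℕ → ℤ) (A B : ℤ)
    (hA : A = ∑ j ∈ Finset.Icc 1 m, a j)
    (hB : B = ∑ k ∈ Finset.Icc 1 (m - 1), b k)
    (hdist : ∀ j ∈ Finset.Icc 1 m, ∀ k ∈ Finset.Icc 1 m, j ≠ k →
      (t j) ^ 2 * v ^ (-(2 * a j)) ≠ (t k) ^ 2 * v ^ (-(2 * a k))) :
    ∑ j ∈ Finset.Icc 1 m,
      (t j) ^ 2 * v ^ (-(2 * a j)) *
        (∏ k ∈ (Finset.Icc 1 m).erase j,
          (1 - (t j) ^ 2 * ((t k) ^ 2)⁻¹ * v ^ (2 * a k - 2 * a j))⁻¹) *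
        (∏ k ∈ Finset.Icc 1 (m - 1),
          (1 - (t j) ^ 2 * ((t k) ^ 2)⁻¹ * v ^ (2 * b k - 2 * a j)))
      = (t m) ^ 2 * v ^ (2 * B - 2 * A) := by
  classical
  set s : Finset ℕ := Finset.Icc 1 m with hs
  set s' : Finset ℕ := Finset.Icc 1 (m - 1) with hs'
  have hsub : s' ⊆ s := Finset.Icc_subset_Icc_right (Nat.sub_le m 1)
  set x : ℕ → F := fun j => (t j) ^ 2 * v ^ (-(2 * a j)) with hx
  set y : ℕ → F := fun k => (t k) ^ 2 * v ^ (-(2 * b k)) with hy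
  have hxj : ∀ j, x j = (t j) ^ 2 * v ^ (-(2 * a j)) := fun j => rfl
  have hyj : ∀ k, y k = (t k) ^ 2 * v ^ (-(2 * b k)) := fun k => rfl
  have hxne : ∀ j ∈ s, x j ≠ 0 := fun j hj =>
    mul_ne_zero (pow_ne_zero 2 (ht j hj)) (zpow_ne_zero _ hv)
  have hyne : ∀ k ∈ s', y k ≠ 0 := fun k hk =>
    mul_ne_zero (pow_ne_zero 2 (ht k (hsub hk))) (zpow_ne_zero _ hv)
  have hinj : Set.InjOn x s := by
    intro j hj k hk hjk
    by_contra hne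
    exact hdist j (by simpa [hs] using hj) k (by simpa [hs] using hk) hne hjk
  have hcard : s.card = m := by simp [hs]
  have hcard' : s'.card = m - 1 := by simp [hs']
  have hfac1 : ∀ j, ∀ k ∈ s,
      (t j) ^ 2 * ((t k) ^ 2)⁻¹ * v ^ (2 * a k - 2 * a j) = x j * (x k)⁻¹ := by
    intro j k hk
    have htk := pow_ne_zero 2 (ht k hk)
    rw [hxj, hxj, mul_inv, ← zpow_neg, neg_neg, zpow_sub₀ hv, zpow_neg]
    field_simp
  have hfac2 : ∀ j, ∀ k ∈ s',
      (t j) ^ 2 * ((t k) ^ 2)⁻¹ * v ^ (2 * b k - 2 * a j) = x j * (y k)⁻¹ := by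
    intro j k hk
    have htk := pow_ne_zero 2 (ht k (hsub hk))
    rw [hxj, hyj, mul_inv, ← zpow_neg, neg_neg, zpow_sub₀ hv, zpow_neg]
    field_simp
  set P : Polynomial F :=
    Polynomial.C ((-1 : F) ^ (m - 1)) * Lagrange.nodal s' y with hP
  have hPdeg : P.degree < s.card := by
    have h1 : ((-1 : F) ^ (m - 1)) ≠ 0 := pow_ne_zero _ (neg_ne_zero.mpr one_ne_zero)
    rw [hP, hcard, Polynomial.degree_C_mul h1, Lagrange.degree_nodal, hcard']
    exact_mod_cast Nat.sub_lt_of_pos_le Nat.one_pos hm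
  have hPeval : ∀ j, P.eval (x j) = ∏ k ∈ s', (y k - x j) := by
    intro j
    rw [hP, Polynomial.eval_mul, Polynomial.eval_C, Lagrange.eval_nodal, ← hcard',
      ← Finset.prod_const (-1 : F), ← Finset.prod_mul_distrib]
    exact Finset.prod_congr rfl fun k _ => by ring
  have hPcoeff : P.coeff (s.card - 1) = (-1 : F) ^ (m - 1) := by
    have h1 : (Lagrange.nodal s' y).natDegree = m - 1 := by
      rw [Lagrange.natDegree_nodal, hcard']
    rw [hP, Polynomial.coeff_C_mul, hcard, ← h1, Lagrange.nodal_monic.coeff_natDegree, mul_one]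
  have hterm : ∀ j ∈ s,
      x j * (∏ k ∈ s.erase j,
          (1 - (t j) ^ 2 * ((t k) ^ 2)⁻¹ * v ^ (2 * a k - 2 * a j))⁻¹) *
        (∏ k ∈ s', (1 - (t j) ^ 2 * ((t k) ^ 2)⁻¹ * v ^ (2 * b k - 2 * a j)))
      = ((∏ k ∈ s, x k) * (∏ k ∈ s', (y k)⁻¹) * (-1 : F) ^ (m - 1)) *
        (P.eval (x j) * ∏ k ∈ s.erase j, (x j - x k)⁻¹) := by
    intro j hj
    have h1 : ∏ k ∈ s.erase j,
        (1 - (t j) ^ 2 * ((t k) ^ 2)⁻¹ * v ^ (2 * a k - 2 * a j))⁻¹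
        = (∏ k ∈ s.erase j, x k) * ((-1 : F) ^ (m - 1) * ∏ k ∈ s.erase j, (x j - x k)⁻¹) := by
      have hc : (-1 : F) ^ (m - 1) = ∏ _k ∈ s.erase j, (-1 : F) := by
        rw [Finset.prod_const, Finset.card_erase_of_mem hj, hcard]
      rw [hc, ← Finset.prod_mul_distrib, ← Finset.prod_mul_distrib]
      refine Finset.prod_congr rfl fun k hk => ?_
      have hks := Finset.mem_of_mem_erase hk
      rw [hfac1 j k hks]
      rw [show (1 : F) - x j * (x k)⁻¹ = (x k - x j) * (x k)⁻¹ by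
        field_simp [hxne k hks]]
      rw [mul_inv, inv_inv]
      rw [show x k - x j = -(x j - x k) by ring, inv_neg]
      ring
    have h2 : ∏ k ∈ s', (1 - (t j) ^ 2 * ((t k) ^ 2)⁻¹ * v ^ (2 * b k - 2 * a j))
        = P.eval (x j) * ∏ k ∈ s', (y k)⁻¹ := by
      rw [hPeval, ← Finset.prod_mul_distrib]
      refine Finset.prod_congr rfl fun k hk => ?_
      rw [hfac2 j k hk]
      field_simp [hyne k hk]
    rw [h1, h2,
      show x j * ((∏ k ∈ s.erase j, x k) * ((-1 : F) ^ (m - 1)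
          * ∏ k ∈ s.erase j, (x j - x k)⁻¹))
        * (Polynomial.eval (x j) P * ∏ k ∈ s', (y k)⁻¹)
      = (x j * ∏ k ∈ s.erase j, x k) * (∏ k ∈ s', (y k)⁻¹) * (-1 : F) ^ (m - 1)
        * (Polynomial.eval (x j) P * ∏ k ∈ s.erase j, (x j - x k)⁻¹) from by ring,
      Finset.mul_prod_erase s x hj]
  calc
    ∑ j ∈ s, (t j) ^ 2 * v ^ (-(2 * a j)) *
        (∏ k ∈ s.erase j, (1 - (t j) ^ 2 * ((t k) ^ 2)⁻¹ * v ^ (2 * a k - 2 * a j))⁻¹) *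
        (∏ k ∈ s', (1 - (t j) ^ 2 * ((t k) ^ 2)⁻¹ * v ^ (2 * b k - 2 * a j)))
      = ∑ j ∈ s, ((∏ k ∈ s, x k) * (∏ k ∈ s', (y k)⁻¹) * (-1 : F) ^ (m - 1)) *
          (P.eval (x j) * ∏ k ∈ s.erase j, (x j - x k)⁻¹) :=
        Finset.sum_congr rfl fun j hj => hterm j hj
    _ = ((∏ k ∈ s, x k) * (∏ k ∈ s', (y k)⁻¹) * (-1 : F) ^ (m - 1)) *
          ∑ j ∈ s, P.eval (x j) * ∏ k ∈ s.erase j, (x j - x k)⁻¹ := by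
        rw [Finset.mul_sum]
    _ = (∏ k ∈ s, x k) * (∏ k ∈ s', (y k)⁻¹) := by
        rw [aux_lagrange s x hinj P hPdeg, hPcoeff, mul_assoc, ← pow_add, ← two_mul,
          pow_mul, neg_one_sq, one_pow, mul_one]
    _ = (t m) ^ 2 * v ^ (2 * B - 2 * A) := by
        have hsplit : ∏ k ∈ s, x k = (∏ k ∈ s', x k) * x m := by
          rw [hs, hs', show m = (m - 1) + 1 from (Nat.succ_pred_eq_of_pos hm).symm]
          exact Finset.prod_Icc_succ_top (by omega) x
        have hAs : A = (∑ j ∈ s', a j) + a m := by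
          rw [hA, hs, hs', show m = (m - 1) + 1 from (Nat.succ_pred_eq_of_pos hm).symm]
          exact Finset.sum_Icc_succ_top (by omega) a
        have hxy : ∀ k ∈ s', x k * (y k)⁻¹ = v ^ (2 * b k - 2 * a k) := by
          intro k hk
          have htk := pow_ne_zero 2 (ht k (hsub hk))
          rw [hxj, hyj, mul_inv, ← zpow_neg, neg_neg, zpow_sub₀ hv, zpow_neg, div_eq_mul_inv,
            show t k ^ 2 * (v ^ (2 * a k))⁻¹ * ((t k ^ 2)⁻¹ * v ^ (2 * b k))
              = t k ^ 2 * (t k ^ 2)⁻¹ * (v ^ (2 * b k) * (v ^ (2 * a k))⁻¹) from by ring,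
            mul_inv_cancel₀ htk, one_mul]
        rw [hsplit, mul_comm _ (x m), mul_assoc, ← Finset.prod_mul_distrib,
          Finset.prod_congr rfl hxy, ← aux_zpow_sum hv, hxj, mul_assoc, ← zpow_add₀ hv]
        congr 1
        rw [Finset.sum_sub_distrib, ← Finset.mul_sum, ← Finset.mul_sum, hB, hAs]
        ring
end

section
/- Let F be a field, let i ≥ 1 be an integer, let s_1, …, s_i be nonzero pairwise distinct elements of F, and let p_1, …, p_{i-1} be nonzero elements of F. Then Σ_{j=1}^{i} s_j ∏_{k ≤ i, k ≠ j} (1 − s_j s_k^{-1})^{-1} ∏_{k=1}^{i-1} (1 − s_j p_k^{-1}) = (s_1 ⋯ s_i)·(p_1 ⋯ p_{i-1})^{-1}. -/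
open Finset Polynomial

lemma leadingCoeff_basisDivisor {F : Type*} [Field F] (x y : F) :
    (Lagrange.basisDivisor x y).leadingCoeff = (x - y)⁻¹ := by
  rcases eq_or_ne x y with h | h
  · simp [Lagrange.basisDivisor, h]
  · rw [Lagrange.basisDivisor, leadingCoeff_mul, leadingCoeff_C,
      (monic_X_sub_C y).leadingCoeff, mul_one]

lemma lag_top_coeff {F : Type*} [Field F] (t : Finset ℕ) (v : ℕ → F)
    (hv : Set.InjOn v t) (f : Polynomial F) (hf : f.degree < t.card) :
    ∑ j ∈ t, f.eval (v j) * ∏ k ∈ t.erase j, (v j - v k)⁻¹ = f.coeff (t.card - 1) := by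
  classical
  conv_rhs => rw [Lagrange.eq_interpolate hv hf]
  rw [Lagrange.interpolate_apply, Polynomial.finset_sum_coeff]
  refine Finset.sum_congr rfl fun j hj => ?_
  rw [Polynomial.coeff_C_mul]
  congr 1
  have hd : (Lagrange.basis t v j).natDegree = t.card - 1 := Lagrange.natDegree_basis hv hj
  rw [← hd, Polynomial.coeff_natDegree, Lagrange.basis, Polynomial.leadingCoeff_prod]
  exact Finset.prod_congr rfl fun k _ => (leadingCoeff_basisDivisor _ _).symm

/-- Reduced form of the identity in Proposition 2.22(b) ('hlop') of
Braverman–Finkelberg. -/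
theorem stmt_3 (F : Type*) [Field F] (i : ℕ) (hi : 1 ≤ i)
    (s p : ℕ → F)
    (hs : ∀ j ∈ Finset.Icc 1 i, s j ≠ 0)
    (hp : ∀ k ∈ Finset.Icc 1 (i - 1), p k ≠ 0)
    (hdist : ∀ j ∈ Finset.Icc 1 i, ∀ k ∈ Finset.Icc 1 i, j ≠ k → s j ≠ s k) :
    ∑ j ∈ Finset.Icc 1 i,
      s j * (∏ k ∈ (Finset.Icc 1 i).erase j, (1 - s j * (s k)⁻¹)⁻¹) *
        (∏ k ∈ Finset.Icc 1 (i - 1), (1 - s j * (p k)⁻¹))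
      = (∏ j ∈ Finset.Icc 1 i, s j) * (∏ k ∈ Finset.Icc 1 (i - 1), p k)⁻¹ := by
  classical
  set t := Finset.Icc 1 i with ht
  have hcard : t.card = i := by simp [ht]
  have hv : Set.InjOn s t := fun a ha b hb hab => by
    by_contra h
    exact hdist a ha b hb h hab
  have hp' : ∀ k ∈ Finset.Icc 1 (i - 1), (-(p k)⁻¹) ≠ 0 := fun k hk => by
    simpa using hp k hk
  set f : Polynomial F :=
    ∏ k ∈ Finset.Icc 1 (i - 1), (Polynomial.C (-(p k)⁻¹) * Polynomial.X + Polynomial.C 1)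
    with hf
  have hfne : ∀ k ∈ Finset.Icc 1 (i - 1),
      (Polynomial.C (-(p k)⁻¹) * Polynomial.X + Polynomial.C 1) ≠ 0 := fun k hk =>
    Polynomial.leadingCoeff_ne_zero.mp
      (by rw [Polynomial.leadingCoeff_linear (hp' k hk)]; exact hp' k hk)
  have hfnat : f.natDegree = i - 1 := by
    rw [hf, Polynomial.natDegree_prod _ _ hfne,
      Finset.sum_congr rfl fun k hk => Polynomial.natDegree_linear (hp' k hk)]
    simp
  have hf0 : f ≠ 0 := Finset.prod_ne_zero_iff.mpr hfne
  have hdeg : f.degree < t.card := by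
    rw [Polynomial.degree_eq_natDegree hf0, hfnat, hcard]
    exact_mod_cast Nat.sub_lt_of_pos_le Nat.one_pos hi
  have key := lag_top_coeff t s hv f hdeg
  have heval : ∀ j, f.eval (s j) = ∏ k ∈ Finset.Icc 1 (i - 1), (1 - s j * (p k)⁻¹) := by
    intro j
    rw [hf, Polynomial.eval_prod]
    refine Finset.prod_congr rfl fun k hk => ?_
    simp only [Polynomial.eval_add, Polynomial.eval_mul, Polynomial.eval_C, Polynomial.eval_X]
    ring
  have hcoeff : f.coeff (t.card - 1) = ∏ k ∈ Finset.Icc 1 (i - 1), (-(p k)⁻¹) := by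
    have h1 : t.card - 1 = f.natDegree := by rw [hcard, hfnat]
    rw [h1, Polynomial.coeff_natDegree, hf, Polynomial.leadingCoeff_prod]
    exact Finset.prod_congr rfl fun k hk => Polynomial.leadingCoeff_linear (hp' k hk)
  have hterm : ∀ j ∈ t,
      s j * (∏ k ∈ t.erase j, (1 - s j * (s k)⁻¹)⁻¹) *
        (∏ k ∈ Finset.Icc 1 (i - 1), (1 - s j * (p k)⁻¹))
      = (-1 : F) ^ (i - 1) * (∏ x ∈ t, s x) *
          (f.eval (s j) * ∏ k ∈ t.erase j, (s j - s k)⁻¹) := by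
    intro j hj
    have h1 : ∏ k ∈ t.erase j, (1 - s j * (s k)⁻¹)⁻¹
        = ∏ k ∈ t.erase j, ((-1 : F) * (s k * (s j - s k)⁻¹)) := by
      refine Finset.prod_congr rfl fun k hk => ?_
      have hk' : k ∈ t := Finset.mem_of_mem_erase hk
      have hks : s k ≠ 0 := hs k hk'
      have hne : s j ≠ s k := hdist j hj k hk' (Finset.ne_of_mem_erase hk).symm
      have e1 : 1 - s j * (s k)⁻¹ = (s k - s j) * (s k)⁻¹ := by field_simp
      rw [e1, mul_inv, inv_inv, show s j - s k = -(s k - s j) from by ring, inv_neg]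
      ring
    rw [h1, Finset.prod_mul_distrib, Finset.prod_const, Finset.prod_mul_distrib,
      Finset.card_erase_of_mem hj, hcard, ← heval j, ← Finset.mul_prod_erase t s hj]
    ring
  rw [Finset.sum_congr rfl hterm, ← Finset.mul_sum, key, hcoeff]
  have h2 : ∏ k ∈ Finset.Icc 1 (i - 1), (-(p k)⁻¹)
      = (-1 : F) ^ (i - 1) * ∏ k ∈ Finset.Icc 1 (i - 1), (p k)⁻¹ := by
    rw [show (fun k => -(p k)⁻¹) = fun k => (-1 : F) * (p k)⁻¹ from funext fun k => by ring]
    rw [Finset.prod_mul_distrib, Finset.prod_const]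
    simp
  rw [h2, ← Finset.prod_inv_distrib]
  have h3 : ((-1 : F)) ^ (i - 1) * (-1) ^ (i - 1) = 1 := by
    rw [← mul_pow]; norm_num
  calc (-1 : F) ^ (i - 1) * (∏ x ∈ t, s x) *
        ((-1) ^ (i - 1) * ∏ k ∈ Finset.Icc 1 (i - 1), (p k)⁻¹)
      = ((-1 : F) ^ (i - 1) * (-1) ^ (i - 1)) *
        ((∏ x ∈ t, s x) * ∏ k ∈ Finset.Icc 1 (i - 1), (p k)⁻¹) := by ring
    _ = (∏ x ∈ t, s x) * ∏ k ∈ Finset.Icc 1 (i - 1), (p k)⁻¹ := by rw [h3, one_mul]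
end

section
/- With the setup below, the following two families of relations are equivalent: (i) (v − v^{-1})(E_i F_j − F_j E_i) = δ_{ij}(K_i − K_i^{-1}) for all 1 ≤ i, j ≤ n−1; (ii) (v − v^{-1})(e_i f_j − v^{c_{ij}} f_j e_i) = δ_{ij}(K_i − K_i^{-1}) for all 1 ≤ i, j ≤ n−1. -/
/-!
Conjugation by `K_i` scales `E_j` by `v ^ a_ij` and `F_j` by `v ^ (-a_ij)`, where `a` is the
Cartan matrix of type `A`. Moving the Cartan factors of `e_i f_j` and of `f_j e_i` to the right
therefore gives
`e_i f_j - v ^ c_ij f_j e_i = t • (E_i F_j - F_j E_i) K_i ^ i K_j ^ (-j)`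
with `t ≠ 0`, precisely because `c_ij = (j - i) a_ij`. For `i = j` both `t` and the Cartan
factor are `1`, so the two relations coincide; for `i ≠ j` both sides of either relation vanish
together.
-/

open Finset

section Conjugation

variable {F A : Type*} [Field F] [Ring A] [Algebra F A]

def IsConjEigen (u : Aˣ) (t : F) (x : A) : Prop := (u : A) * x = t • (x * u)

theorem isConjEigen_iff_mul_mul_inv {u : Aˣ} {t : F} {x : A} :
    IsConjEigen u t x ↔ (u : A) * x * ↑u⁻¹ = t • x := by
  constructor
  · intro h
    rw [h, smul_mul_assoc, mul_assoc, Units.mul_inv, mul_one]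
  · intro h
    rw [IsConjEigen, ← smul_mul_assoc, ← h, mul_assoc, Units.inv_mul, mul_one]

theorem isConjEigen_one (x : A) : IsConjEigen (1 : Aˣ) (1 : F) x := by
  simp [IsConjEigen]

namespace IsConjEigen

variable {u w : Aˣ} {t s : F} {x y : A}

theorem mul_units (hu : IsConjEigen u t x) (hw : IsConjEigen w s x) :
    IsConjEigen (u * w) (t * s) x := by
  unfold IsConjEigen at *
  rw [Units.val_mul, mul_assoc, hw, mul_smul_comm, ← mul_assoc, hu, smul_mul_assoc, smul_smul,
    mul_comm s, mul_assoc]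

theorem pow (h : IsConjEigen u t x) (m : ℕ) : IsConjEigen (u ^ m) (t ^ m) x := by
  induction m with
  | zero => simpa using isConjEigen_one x
  | succ k ih => simpa only [pow_succ] using ih.mul_units h

theorem inv (h : IsConjEigen u t x) : IsConjEigen u⁻¹ t⁻¹ x := by
  rw [isConjEigen_iff_mul_mul_inv, inv_inv]
  rcases eq_or_ne t 0 with rfl | ht
  · -- a weight vector of weight `0` is `0`
    have hx : x = 0 := by
      simpa [IsConjEigen] using congrArg ((↑u⁻¹ : A) * ·) h
    simp [hx]
  · have hxu : x * u = t⁻¹ • ((u : A) * x) := by rw [h, smul_smul, inv_mul_cancel₀ ht, one_smul]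
    rw [mul_assoc, hxu, mul_smul_comm, ← mul_assoc, Units.inv_mul, one_mul]

theorem mul (hx : IsConjEigen u t x) (hy : IsConjEigen u s y) :
    IsConjEigen u (t * s) (x * y) := by
  unfold IsConjEigen at *
  rw [← mul_assoc, hx, smul_mul_assoc, mul_assoc, hy, mul_smul_comm, smul_smul, mul_assoc]

theorem mul_sub_smul_mul_eq {P Q : Aˣ} {E F' : A} {α β γ r : F}
    (hPF : IsConjEigen P α F') (hQF : IsConjEigen Q β F') (hQE : IsConjEigen Q γ E)
    (hPQ : Commute (P : A) Q) (hr : r * γ = α) :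
    E * P * (Q * F') - r • (Q * F' * (E * P)) = (α * β) • ((E * F' - F' * E) * ↑(P * Q)) := by
  have hEF : E * P * (Q * F') = (α * β) • (E * F' * ↑(P * Q)) := by
    rw [mul_assoc, ← mul_assoc (P : A), ← Units.val_mul, hPF.mul_units hQF, mul_smul_comm,
      ← mul_assoc]
  have hFE : (Q : A) * F' * (E * P) = (β * γ) • (F' * E * ↑(P * Q)) := by
    rw [mul_assoc, ← mul_assoc F', ← mul_assoc, hQF.mul hQE, smul_mul_assoc, mul_assoc,
      ← hPQ.eq, Units.val_mul]
  rw [hEF, hFE, smul_smul, show r * (β * γ) = α * β by rw [← hr]; ring, ← smul_sub, ← sub_mul]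

end IsConjEigen

end Conjugation

def cartanA (i j : ℕ) : ℤ :=
  if i = j then 2 else if i = j + 1 ∨ j = i + 1 then -1 else 0

theorem cartanA_comm (i j : ℕ) : cartanA i j = cartanA j i := by
  unfold cartanA
  split_ifs <;> omega

theorem sevostyanov_exponent_eq (i j : ℕ) :
    (if j = i + 1 then -1 else if i = j + 1 then 1 else 0 : ℤ) = (j - i) * cartanA i j := by
  unfold cartanA
  split_ifs <;> omega

theorem inv_mul_sq_mul_inv_eq_zpow_cartanA {F : Type*} [Field F] (q : F) {i : ℕ} (hi : 1 ≤ i)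
    (j : ℕ) :
    (if i - 1 = j then q else 1)⁻¹ * (if i = j then q else 1) ^ 2 * (if i + 1 = j then q else 1)⁻¹
      = q ^ cartanA i j := by
  unfold cartanA
  split_ifs <;> first | omega | simp [zpow_neg]

section Sevostyanov

variable {F A : Type*} [Field F] [Ring A] [Algebra F A]

theorem eq_one_and_notMem_Icc_or_mem_Icc {n : ℕ} {L : ℕ → Aˣ} (hL0 : L 0 = 1) (hLn : L n = 1)
    {a : ℕ} (ha : a ≤ n) : (L a = 1 ∧ a ∉ Icc 1 (n - 1)) ∨ a ∈ Icc 1 (n - 1) := by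
  rcases Nat.eq_zero_or_pos a with rfl | ha0
  · exact Or.inl ⟨hL0, by simp⟩
  rcases eq_or_lt_of_le ha with rfl | han
  · exact Or.inl ⟨hLn, by simp; omega⟩
  · exact Or.inr (mem_Icc.mpr ⟨ha0, by omega⟩)

theorem isConjEigen_of_mul_mul_inv {n : ℕ} {L : ℕ → Aˣ} (hL0 : L 0 = 1) (hLn : L n = 1)
    {X : ℕ → A} {q : F}
    (hX : ∀ i ∈ Icc 1 (n - 1), ∀ j ∈ Icc 1 (n - 1),
      (L i : A) * X j * (↑(L i)⁻¹ : A) = (if i = j then q else 1) • X j)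
    {a : ℕ} (ha : a ≤ n) {j : ℕ} (hj : j ∈ Icc 1 (n - 1)) :
    IsConjEigen (L a) (if a = j then q else 1) (X j) := by
  rcases eq_one_and_notMem_Icc_or_mem_Icc hL0 hLn ha with ⟨h1, haj⟩ | haj
  · rw [h1, if_neg (by rintro rfl; exact haj hj)]
    exact isConjEigen_one _
  · exact isConjEigen_iff_mul_mul_inv.mpr (hX a haj j hj)

theorem isConjEigen_K {n : ℕ} {L K : ℕ → Aˣ} (hL0 : L 0 = 1) (hLn : L n = 1)
    (hK : ∀ i, K i = (L (i - 1))⁻¹ * (L i) ^ 2 * (L (i + 1))⁻¹)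
    {X : ℕ → A} {q : F}
    (hX : ∀ i ∈ Icc 1 (n - 1), ∀ j ∈ Icc 1 (n - 1),
      (L i : A) * X j * (↑(L i)⁻¹ : A) = (if i = j then q else 1) • X j)
    {i : ℕ} (hi : i ∈ Icc 1 (n - 1)) {j : ℕ} (hj : j ∈ Icc 1 (n - 1)) :
    IsConjEigen (K i) (q ^ cartanA i j) (X j) := by
  obtain ⟨hi1, hin⟩ := mem_Icc.mp hi
  have hL (a : ℕ) (ha : a ≤ n) := isConjEigen_of_mul_mul_inv hL0 hLn hX ha hj
  rw [hK, ← inv_mul_sq_mul_inv_eq_zpow_cartanA q hi1]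
  exact (((hL _ (by omega)).inv.mul_units ((hL i (by omega)).pow 2)).mul_units
    (hL _ (by omega)).inv)

theorem commute_K {n : ℕ} {L K : ℕ → Aˣ} (hL0 : L 0 = 1) (hLn : L n = 1)
    (hLcomm : ∀ i ∈ Icc 1 (n - 1), ∀ j ∈ Icc 1 (n - 1), Commute (L i : A) (L j : A))
    (hK : ∀ i, K i = (L (i - 1))⁻¹ * (L i) ^ 2 * (L (i + 1))⁻¹)
    {i j : ℕ} (hi : i ∈ Icc 1 (n - 1)) (hj : j ∈ Icc 1 (n - 1)) :
    Commute (K i : A) (K j : A) := by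
  have hL : ∀ a ≤ n, ∀ b ≤ n, Commute (L a : A) (L b : A) := by
    intro a ha b hb
    rcases eq_one_and_notMem_Icc_or_mem_Icc hL0 hLn ha with ⟨h1, -⟩ | ha'
    · rw [h1, Units.val_one]; exact Commute.one_left _
    rcases eq_one_and_notMem_Icc_or_mem_Icc hL0 hLn hb with ⟨h1, -⟩ | hb'
    · rw [h1, Units.val_one]; exact Commute.one_right _
    exact hLcomm a ha' b hb'
  have hLK : ∀ a ≤ n, ∀ k ∈ Icc 1 (n - 1), Commute (L a : A) (K k : A) := by
    intro a ha k hk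
    obtain ⟨hk1, hkn⟩ := mem_Icc.mp hk
    rw [hK k, Units.val_mul, Units.val_mul, Units.val_pow_eq_pow_val]
    exact ((hL a ha _ (by omega)).units_inv_right.mul_right
      ((hL a ha k (by omega)).pow_right 2)).mul_right (hL a ha _ (by omega)).units_inv_right
  obtain ⟨hi1, hin⟩ := mem_Icc.mp hi
  rw [hK i, Units.val_mul, Units.val_mul, Units.val_pow_eq_pow_val]
  exact ((hLK _ (by omega) j hj).units_inv_left.mul_left
    ((hLK i (by omega) j hj).pow_left 2)).mul_left (hLK _ (by omega) j hj).units_inv_left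

end Sevostyanov

theorem stmt_5_general (F : Type*) [Field F] (n : ℕ)
    (v : F) (hv : v ≠ 0)
    (A : Type*) [Ring A] [Algebra F A]
    (L : ℕ → Aˣ) (hL0 : L 0 = 1) (hLn : L n = 1)
    (hLcomm : ∀ i ∈ Finset.Icc 1 (n - 1), ∀ j ∈ Finset.Icc 1 (n - 1),
      Commute (L i : A) (L j : A))
    (K : ℕ → Aˣ) (hK : ∀ i, K i = (L (i - 1))⁻¹ * (L i) ^ 2 * (L (i + 1))⁻¹)
    (EE FF : ℕ → A)
    (hE : ∀ i ∈ Finset.Icc 1 (n - 1), ∀ j ∈ Finset.Icc 1 (n - 1),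
      (L i : A) * EE j * (↑(L i)⁻¹ : A) = (if i = j then v else 1) • EE j)
    (hF : ∀ i ∈ Finset.Icc 1 (n - 1), ∀ j ∈ Finset.Icc 1 (n - 1),
      (L i : A) * FF j * (↑(L i)⁻¹ : A) = (if i = j then v⁻¹ else 1) • FF j)
    (c : ℕ → ℕ → ℤ)
    (hc : ∀ i j, c i j = if j = i + 1 then -1 else if i = j + 1 then 1 else 0)
    (e f : ℕ → A)
    (he : ∀ i, e i = EE i * (K i : A) ^ i)
    (hf : ∀ i, f i = (↑(K i)⁻¹ : A) ^ i * FF i) :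
    (∀ i ∈ Finset.Icc 1 (n - 1), ∀ j ∈ Finset.Icc 1 (n - 1),
      (v - v⁻¹) • (EE i * FF j - FF j * EE i)
        = if i = j then ((K i : A) - (↑(K i)⁻¹ : A)) else 0) ↔
    (∀ i ∈ Finset.Icc 1 (n - 1), ∀ j ∈ Finset.Icc 1 (n - 1),
      (v - v⁻¹) • (e i * f j - v ^ (c i j) • (f j * e i))
        = if i = j then ((K i : A) - (↑(K i)⁻¹ : A)) else 0) := by
  refine forall₂_congr fun i hi => forall₂_congr fun j hj => ?_
  have hexp : v ^ c i j * ((v ^ cartanA j i)⁻¹) ^ j = (v⁻¹ ^ cartanA i j) ^ i := by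
    rw [hc, sevostyanov_exponent_eq, cartanA_comm j i]
    simp only [← zpow_neg, inv_zpow', ← zpow_natCast, ← zpow_mul, ← zpow_add₀ hv]
    ring_nf
  have hPF := (isConjEigen_K hL0 hLn hK hF hi hj).pow i
  have hQF := (isConjEigen_K hL0 hLn hK hF hj hj).inv.pow j
  have hQE := (isConjEigen_K hL0 hLn hK hE hj hi).inv.pow j
  have hPQ := (commute_K hL0 hLn hLcomm hK hi hj).units_inv_right.pow_pow i j
  have key := IsConjEigen.mul_sub_smul_mul_eq hPF hQF hQE hPQ hexp
  rw [he, hf, ← Units.val_pow_eq_pow_val, ← Units.val_pow_eq_pow_val, key]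
  rcases eq_or_ne i j with rfl | hij
  · rw [← mul_pow, mul_inv_cancel₀ (zpow_ne_zero _ (inv_ne_zero hv)), one_pow, one_smul,
      inv_pow, mul_inv_cancel, Units.val_one, mul_one]
  · have ht : (v⁻¹ ^ cartanA i j) ^ i * ((v⁻¹ ^ cartanA j j)⁻¹) ^ j ≠ 0 := by
      simp [hv, zpow_ne_zero]
    rw [if_neg hij, smul_comm, smul_eq_zero_iff_right ht, ← smul_mul_assoc,
      Units.mul_left_eq_zero]

/-- Equivalence of the commutation relation (3) of the standard presentation
with the relation (10) of Sevostyanov's presentation of `U_v(sl_n)`,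
Section 2.9 of Braverman–Finkelberg. Here `K i = L_{i-1}⁻¹ L_i² L_{i+1}⁻¹`
(with `L 0 = L n = 1`), `c_{i,i+1} = -1`, `c_{i+1,i} = 1`, `c_{ij} = 0`
otherwise, `e i = E_i K_i^i`, `f i = K_i^{-i} F_i`. -/
theorem stmt_5 (F : Type*) [Field F] (n : ℕ) (hn : 2 ≤ n)
    (v : F) (hv : v ≠ 0)
    (A : Type*) [Ring A] [Algebra F A]
    (L : ℕ → Aˣ) (hL0 : L 0 = 1) (hLn : L n = 1)
    (hLcomm : ∀ i ∈ Finset.Icc 1 (n - 1), ∀ j ∈ Finset.Icc 1 (n - 1),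
      Commute (L i : A) (L j : A))
    (K : ℕ → Aˣ) (hK : ∀ i, K i = (L (i - 1))⁻¹ * (L i) ^ 2 * (L (i + 1))⁻¹)
    (EE FF : ℕ → A)
    (hE : ∀ i ∈ Finset.Icc 1 (n - 1), ∀ j ∈ Finset.Icc 1 (n - 1),
      (L i : A) * EE j * (↑(L i)⁻¹ : A) = (if i = j then v else 1) • EE j)
    (hF : ∀ i ∈ Finset.Icc 1 (n - 1), ∀ j ∈ Finset.Icc 1 (n - 1),
      (L i : A) * FF j * (↑(L i)⁻¹ : A) = (if i = j then v⁻¹ else 1) • FF j)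
    (c : ℕ → ℕ → ℤ)
    (hc : ∀ i j, c i j = if j = i + 1 then -1 else if i = j + 1 then 1 else 0)
    (e f : ℕ → A)
    (he : ∀ i, e i = EE i * (K i : A) ^ i)
    (hf : ∀ i, f i = (↑(K i)⁻¹ : A) ^ i * FF i) :
    (∀ i ∈ Finset.Icc 1 (n - 1), ∀ j ∈ Finset.Icc 1 (n - 1),
      (v - v⁻¹) • (EE i * FF j - FF j * EE i)
        = if i = j then ((K i : A) - (↑(K i)⁻¹ : A)) else 0) ↔
    (∀ i ∈ Finset.Icc 1 (n - 1), ∀ j ∈ Finset.Icc 1 (n - 1),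
      (v - v⁻¹) • (e i * f j - v ^ (c i j) • (f j * e i))
        = if i = j then ((K i : A) - (↑(K i)⁻¹ : A)) else 0) :=
  stmt_5_general F n v hv A L hL0 hLn hLcomm K hK EE FF hE hF c hc e f he hf
end

section
/- With the affine setup below, the following two families of relations are equivalent: (i) (v − v^{-1})(E_i F_j − F_j E_i) = δ_{ij}(K_i − K_i^{-1}) for all i, j ∈ ℤ/nℤ; (ii) (v − v^{-1})(e_i f_j − v^{c_{ij}} f_j e_i) = δ_{ij}(K_i − K_i^{-1}) for all i, j ∈ ℤ/nℤ. -/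
section helpers
variable {F : Type*} [Field F] {A : Type*} [Ring A] [Algebra F A]

lemma swap_of_conj (t : F) (u : Aˣ) (x : A) (h : (u : A) * x * (↑u⁻¹ : A) = t • x) :
    (u : A) * x = t • (x * (u : A)) := by
  have h2 := congrArg (· * (u : A)) h
  simpa [mul_assoc, smul_mul_assoc] using h2

lemma swap_inv_of (t : F) (ht : t ≠ 0) (u : Aˣ) (x : A) (h : (u : A) * x = t • (x * (u : A))) :
    (↑u⁻¹ : A) * x = t⁻¹ • (x * (↑u⁻¹ : A)) := by
  have h2 : x * (u : A) = t⁻¹ • ((u : A) * x) := by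
    rw [h, smul_smul, inv_mul_cancel₀ ht, one_smul]
  calc (↑u⁻¹ : A) * x = (↑u⁻¹ : A) * (x * (u : A) * (↑u⁻¹ : A)) := by
        simp [mul_assoc]
    _ = (↑u⁻¹ : A) * ((t⁻¹ • ((u : A) * x)) * (↑u⁻¹ : A)) := by rw [h2]
    _ = t⁻¹ • (x * (↑u⁻¹ : A)) := by
        rw [smul_mul_assoc, mul_smul_comm, ← mul_assoc, ← mul_assoc]
        simp

lemma swap_mul_left (s t : F) (a b x : A) (ha : a * x = s • (x * a)) (hb : b * x = t • (x * b)) :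
    a * b * x = (s * t) • (x * (a * b)) := by
  calc a * b * x = a * (b * x) := mul_assoc _ _ _
    _ = a * (t • (x * b)) := by rw [hb]
    _ = t • (a * x * b) := by rw [mul_smul_comm, mul_assoc]
    _ = t • ((s • (x * a)) * b) := by rw [ha]
    _ = (s * t) • (x * (a * b)) := by
        rw [smul_mul_assoc, smul_smul, mul_assoc, mul_comm t s]

lemma swap_mul_right (s t : F) (a x y : A) (hx : a * x = s • (x * a)) (hy : a * y = t • (y * a)) :
    a * (x * y) = (s * t) • (x * y * a) := by
  calc a * (x * y) = a * x * y := (mul_assoc _ _ _).symm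
    _ = (s • (x * a)) * y := by rw [hx]
    _ = s • (x * (a * y)) := by rw [smul_mul_assoc, mul_assoc]
    _ = s • (x * (t • (y * a))) := by rw [hy]
    _ = (s * t) • (x * y * a) := by rw [mul_smul_comm, smul_smul, mul_assoc]

end helpers

/-- Equivalence of the commutation relation (22) of the standard presentation
with the relation (30) of Sevostyanov's presentation of the affine quantum
group `U_v(ŝl_n)`, Section 3.5 of Braverman–Finkelberg. Here indices are in
`ℤ/nℤ`, `K i = L_i² L_{i+1} L_{i-1} C^{δ_{i,0}}`, `c_{i,i+1} = -1`,
`c_{i+1,i} = 1`, `c_{ij} = 0` otherwise, `e i = E_i L_i⁻¹ L_{i+1}`,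
`f i = L_i L_{i+1}⁻¹ F_i`. -/
theorem stmt_9 (F : Type*) [Field F] (n : ℕ) (hn : 3 ≤ n)
    (v : F) (hv : v ≠ 0)
    (A : Type*) [Ring A] [Algebra F A]
    (L : ZMod n → Aˣ) (C : Aˣ)
    (hLcomm : ∀ i j : ZMod n, Commute (L i : A) (L j : A))
    (hC : ∀ a : A, (C : A) * a = a * (C : A))
    (K : ZMod n → Aˣ)
    (hK : ∀ i, K i = (L i) ^ 2 * L (i + 1) * L (i - 1) *
      C ^ (if i = 0 then 1 else 0))
    (EE FF : ZMod n → A)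
    (hE : ∀ i j : ZMod n,
      (L j : A) * EE i * (↑(L j)⁻¹ : A) = (if i = j then v else 1) • EE i)
    (hF : ∀ i j : ZMod n,
      (L j : A) * FF i * (↑(L j)⁻¹ : A) = (if i = j then v⁻¹ else 1) • FF i)
    (c : ZMod n → ZMod n → ℤ)
    (hc : ∀ i j, c i j = if j = i + 1 then -1 else if i = j + 1 then 1 else 0)
    (e f : ZMod n → A)
    (he : ∀ i, e i = EE i * (↑(L i)⁻¹ : A) * (L (i + 1) : A))
    (hf : ∀ i, f i = (L i : A) * (↑(L (i + 1))⁻¹ : A) * FF i) :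
    (∀ i j : ZMod n,
      (v - v⁻¹) • (EE i * FF j - FF j * EE i)
        = if i = j then ((K i : A) - (↑(K i)⁻¹ : A)) else 0) ↔
    (∀ i j : ZMod n,
      (v - v⁻¹) • (e i * f j - v ^ (c i j) • (f j * e i))
        = if i = j then ((K i : A) - (↑(K i)⁻¹ : A)) else 0) := by
  haveI : NeZero n := ⟨by omega⟩
  haveI : Fact (1 < n) := ⟨by omega⟩
  have hone : (1 : ZMod n) ≠ 0 := one_ne_zero
  have hadd1 : ∀ k : ZMod n, k ≠ k + 1 := by
    intro k h
    exact hone (left_eq_add.mp h)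
  have htwo : (1 + 1 : ZMod n) ≠ 0 := by
    have : ((2 : ℕ) : ZMod n) ≠ 0 := by
      rw [Ne, ZMod.natCast_eq_zero_iff]
      intro h
      have := Nat.le_of_dvd (by norm_num) h
      omega
    simpa [one_add_one_eq_two] using this
  have hadd2 : ∀ k : ZMod n, k ≠ k + 1 + 1 := by
    intro k h
    rw [add_assoc] at h
    exact htwo (left_eq_add.mp h)
  have key : ∀ i j : ZMod n, ∃ (τ : F) (u : Aˣ), τ ≠ 0 ∧ (i = j → τ = 1 ∧ u = 1) ∧
      (v - v⁻¹) • (e i * f j - v ^ (c i j) • (f j * e i))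
        = τ • (((v - v⁻¹) • (EE i * FF j - FF j * EE i)) * (u : A)) := by
    intro i j
    -- single-factor swaps
    have hEs : ∀ k : ZMod n, (L k : A) * EE i = (if i = k then v else 1) • (EE i * (L k : A)) :=
      fun k => swap_of_conj _ _ _ (hE i k)
    have hEs' : ∀ k : ZMod n, (↑(L k)⁻¹ : A) * EE i
        = (if i = k then v⁻¹ else 1) • (EE i * (↑(L k)⁻¹ : A)) := by
      intro k
      have h := swap_inv_of _ (by split_ifs <;> simp [hv]) (L k) (EE i) (hEs k)
      simpa [apply_ite (f := (Inv.inv : F → F))] using h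
    have hFs : ∀ k : ZMod n, (L k : A) * FF j = (if j = k then v⁻¹ else 1) • (FF j * (L k : A)) :=
      fun k => swap_of_conj _ _ _ (hF j k)
    have hFs' : ∀ k : ZMod n, (↑(L k)⁻¹ : A) * FF j
        = (if j = k then v else 1) • (FF j * (↑(L k)⁻¹ : A)) := by
      intro k
      have h := swap_inv_of _ (by split_ifs <;> simp [hv]) (L k) (FF j) (hFs k)
      simpa [apply_ite (f := (Inv.inv : F → F))] using h
    have hFa3 : (L j : A) * FF j = v⁻¹ • (FF j * (L j : A)) := by simpa using hFs j
    have hFa4 : (↑(L (j + 1))⁻¹ : A) * FF j = (1 : F) • (FF j * (↑(L (j + 1))⁻¹ : A)) := by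
      simpa [hadd1 j] using hFs' (j + 1)
    -- grouped swaps
    have h12 : (↑(L i)⁻¹ : A) * (L (i + 1) : A) * FF j
        = ((if j = i then v else 1) * (if j = i + 1 then v⁻¹ else 1)) •
          (FF j * ((↑(L i)⁻¹ : A) * (L (i + 1) : A))) :=
      swap_mul_left _ _ _ _ _ (hFs' i) (hFs (i + 1))
    have hZF : (L j : A) * (↑(L (j + 1))⁻¹ : A) * FF j
        = (v⁻¹ * 1) • (FF j * ((L j : A) * (↑(L (j + 1))⁻¹ : A))) :=
      swap_mul_left _ _ _ _ _ hFa3 hFa4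
    have hX : ((↑(L i)⁻¹ : A) * (L (i + 1) : A)) * ((L j : A) * (↑(L (j + 1))⁻¹ : A)) * FF j
        = (((if j = i then v else 1) * (if j = i + 1 then v⁻¹ else 1)) * (v⁻¹ * 1)) •
          (FF j * (((↑(L i)⁻¹ : A) * (L (i + 1) : A)) * ((L j : A) * (↑(L (j + 1))⁻¹ : A)))) :=
      swap_mul_left _ _ _ _ _ h12 hZF
    have hZE : (L j : A) * (↑(L (j + 1))⁻¹ : A) * EE i
        = ((if i = j then v else 1) * (if i = j + 1 then v⁻¹ else 1)) •
          (EE i * ((L j : A) * (↑(L (j + 1))⁻¹ : A))) :=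
      swap_mul_left _ _ _ _ _ (hEs j) (hEs' (j + 1))
    have hZFE := swap_mul_right _ _ _ _ _ hZF hZE
    -- commutation of the L-monomials
    have cZM : ((L j : A) * (↑(L (j + 1))⁻¹ : A)) * ((↑(L i)⁻¹ : A) * (L (i + 1) : A))
        = ((↑(L i)⁻¹ : A) * (L (i + 1) : A)) * ((L j : A) * (↑(L (j + 1))⁻¹ : A)) := by
      have c1 : Commute ((L j : A) * (↑(L (j + 1))⁻¹ : A)) ((↑(L i)⁻¹ : A) * (L (i + 1) : A)) := by
        have cji : Commute (L j : A) (↑(L i)⁻¹ : A) := ((hLcomm i j).units_inv_left).symm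
        have cji1 : Commute (L j : A) (L (i + 1) : A) := hLcomm j (i + 1)
        have cj1i : Commute (↑(L (j + 1))⁻¹ : A) (↑(L i)⁻¹ : A) :=
          (((hLcomm i (j + 1)).units_inv_left).symm).units_inv_left
        have cj1i1 : Commute (↑(L (j + 1))⁻¹ : A) (L (i + 1) : A) :=
          (hLcomm (j + 1) (i + 1)).units_inv_left
        exact (cji.mul_right cji1).mul_left (cj1i.mul_right cj1i1)
      exact c1.eq
    -- main products
    have h_ef : e i * f j
        = (((if j = i then v else 1) * (if j = i + 1 then v⁻¹ else 1)) * (v⁻¹ * 1)) •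
          (EE i * FF j *
            (((↑(L i)⁻¹ : A) * (L (i + 1) : A)) * ((L j : A) * (↑(L (j + 1))⁻¹ : A)))) := by
      calc e i * f j
          = EE i * ((((↑(L i)⁻¹ : A) * (L (i + 1) : A)) *
              ((L j : A) * (↑(L (j + 1))⁻¹ : A))) * FF j) := by
            rw [he, hf]; simp only [mul_assoc]
        _ = EE i * ((((if j = i then v else 1) * (if j = i + 1 then v⁻¹ else 1)) * (v⁻¹ * 1)) •
              (FF j * (((↑(L i)⁻¹ : A) * (L (i + 1) : A)) *
                ((L j : A) * (↑(L (j + 1))⁻¹ : A))))) := by rw [hX]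
        _ = _ := by rw [mul_smul_comm, ← mul_assoc (EE i)]
    have h_fe : f j * e i
        = ((v⁻¹ * 1) * ((if i = j then v else 1) * (if i = j + 1 then v⁻¹ else 1))) •
          (FF j * EE i *
            (((↑(L i)⁻¹ : A) * (L (i + 1) : A)) * ((L j : A) * (↑(L (j + 1))⁻¹ : A)))) := by
      calc f j * e i
          = ((L j : A) * (↑(L (j + 1))⁻¹ : A)) * (FF j * EE i) *
              ((↑(L i)⁻¹ : A) * (L (i + 1) : A)) := by
            rw [hf, he]; simp only [mul_assoc]
        _ = (((v⁻¹ * 1) * ((if i = j then v else 1) * (if i = j + 1 then v⁻¹ else 1))) •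
              (FF j * EE i * ((L j : A) * (↑(L (j + 1))⁻¹ : A)))) *
              ((↑(L i)⁻¹ : A) * (L (i + 1) : A)) := by
            rw [hZFE]
        _ = ((v⁻¹ * 1) * ((if i = j then v else 1) * (if i = j + 1 then v⁻¹ else 1))) •
              (FF j * EE i * (((L j : A) * (↑(L (j + 1))⁻¹ : A)) *
                ((↑(L i)⁻¹ : A) * (L (i + 1) : A)))) := by
            rw [smul_mul_assoc, mul_assoc (FF j * EE i)]
        _ = _ := by rw [cZM]
    -- scalar identity
    have hτ : (((if j = i then v else 1) * (if j = i + 1 then v⁻¹ else 1)) * (v⁻¹ * 1))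
        = v ^ (c i j) *
          ((v⁻¹ * 1) * ((if i = j then v else 1) * (if i = j + 1 then v⁻¹ else 1))) := by
      rw [hc i j]
      by_cases h1 : i = j
      · subst h1
        simp [hadd1 i, inv_mul_cancel₀ hv, mul_inv_cancel₀ hv]
      · by_cases h2 : j = i + 1
        · have h3 : i ≠ j + 1 := by rw [h2]; exact hadd2 i
          have h4 : j ≠ i := fun h => h1 h.symm
          rw [if_neg h4, if_pos h2, if_pos h2, if_neg h1, if_neg h3, zpow_neg_one]
          ring
        · by_cases h3 : i = j + 1
          · have h4 : j ≠ i := by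
              intro h
              rw [← h] at h3
              exact hadd1 j h3
            rw [if_neg h4, if_neg h2, if_neg h2, if_pos h3, if_neg h1, if_pos h3, zpow_one]
            field_simp
          · have h4 : j ≠ i := fun h => h1 h.symm
            rw [if_neg h4, if_neg h2, if_neg h2, if_neg h3, if_neg h1, if_neg h3, zpow_zero]
            ring
    refine ⟨((if j = i then v else 1) * (if j = i + 1 then v⁻¹ else 1)) * (v⁻¹ * 1),
      ((L i)⁻¹ * L (i + 1)) * (L j * (L (j + 1))⁻¹), ?_, ?_, ?_⟩
    · refine mul_ne_zero (mul_ne_zero ?_ ?_) (mul_ne_zero (inv_ne_zero hv) one_ne_zero) <;>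
        split_ifs <;> simp [hv]
    · intro hij
      subst hij
      constructor
      · simp [(hadd1 i).symm, mul_inv_cancel₀ hv]
      · have hcu : L (i + 1) * L i = L i * L (i + 1) :=
          Units.ext (hLcomm (i + 1) i)
        calc ((L i)⁻¹ * L (i + 1)) * (L i * (L (i + 1))⁻¹)
            = (L i)⁻¹ * ((L (i + 1) * L i) * (L (i + 1))⁻¹) := by
              simp only [mul_assoc]
          _ = (L i)⁻¹ * ((L i * L (i + 1)) * (L (i + 1))⁻¹) := by rw [hcu]
          _ = 1 := by group
    · rw [h_ef, h_fe, smul_smul, ← hτ, ← smul_sub, ← sub_mul]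
      push_cast [Units.val_mul]
      rw [smul_mul_assoc, smul_smul, smul_smul, mul_comm (v - v⁻¹)]
  constructor
  · intro H i j
    obtain ⟨τ, u, hτ0, hdiag, heq⟩ := key i j
    rw [heq, H i j]
    by_cases hij : i = j
    · obtain ⟨ht1, hu1⟩ := hdiag hij
      rw [if_pos hij, ht1, hu1, one_smul, Units.val_one, mul_one]
    · rw [if_neg hij, zero_mul, smul_zero]
  · intro H i j
    obtain ⟨τ, u, hτ0, hdiag, heq⟩ := key i j
    have h0 := H i j
    rw [heq] at h0
    by_cases hij : i = j
    · obtain ⟨ht1, hu1⟩ := hdiag hij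
      rw [ht1, hu1, one_smul, Units.val_one, mul_one] at h0
      exact h0
    · rw [if_neg hij] at h0 ⊢
      have h1 : ((v - v⁻¹) • (EE i * FF j - FF j * EE i)) * (u : A) = 0 := by
        rcases smul_eq_zero.mp h0 with h | h
        · exact absurd h hτ0
        · exact h
      exact (Units.mul_left_eq_zero u).mp h1
end

section
/- Fix an integer n ≥ 2 and a tuple d = (d_1, …, d_{n-1}) of nonnegative integers. Let A(d) be the set of collections (d_{ij}) of nonnegative integers, indexed by pairs (i,j) with 1 ≤ j ≤ i ≤ n−1, such that Σ_{j=1}^{i} d_{ij} = d_i for every 1 ≤ i ≤ n−1, and d_{kj} ≥ d_{ij} whenever 1 ≤ j ≤ k ≤ i ≤ n−1. Let K(d) be the set of functions m assigning a nonnegative integer m(j,i) to each pair (j,i) with 1 ≤ j ≤ i ≤ n−1, such that Σ_{(j,i) : j ≤ k ≤ i} m(j,i) = d_k for every 1 ≤ k ≤ n−1. Then the map sending (d_{ij}) to the function m defined by m(j,i) := d_{ij} − d_{i+1,j}, with the convention d_{n,j} := 0, is a well-defined bijection from A(d) onto K(d). -/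
open Finset

/-- The set `A(d)` of collections `(d_{ij})_{1 ≤ j ≤ i ≤ n-1}` of nonnegative
integers with row sums `Σ_j d_{ij} = d_i` and `d_{kj} ≥ d_{ij}` for
`j ≤ k ≤ i`, parametrizing the torus-fixed points of the Laumon space `𝔔_d`.
A collection is encoded as a function `dd : ℕ → ℕ → ℕ`, `(i, j) ↦ d_{ij}`,
vanishing outside the index set `{(i,j) : 1 ≤ j ≤ i ≤ n-1}`. -/
def laumonFixedSet (n : ℕ) (d : ℕ → ℕ) : Set (ℕ → ℕ → ℕ) :=
  {dd | (∀ i j, dd i j ≠ 0 → 1 ≤ j ∧ j ≤ i ∧ i ≤ n - 1) ∧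
        (∀ i, 1 ≤ i → i ≤ n - 1 → ∑ j ∈ Finset.Icc 1 i, dd i j = d i) ∧
        (∀ j k i, 1 ≤ j → j ≤ k → k ≤ i → i ≤ n - 1 → dd i j ≤ dd k j)}

/-- The set `K(d)` of Kostant partitions: functions `m` assigning a
nonnegative integer `m(j,i)` to each pair `1 ≤ j ≤ i ≤ n-1` (i.e. to each
positive root `α_j + … + α_i` of `sl_n`), vanishing outside this index set,
such that `Σ_{(j,i) : j ≤ k ≤ i} m(j,i) = d_k` for each `1 ≤ k ≤ n-1`. -/
def kostantSet (n : ℕ) (d : ℕ → ℕ) : Set (ℕ → ℕ → ℕ) :=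
  {m | (∀ j i, m j i ≠ 0 → 1 ≤ j ∧ j ≤ i ∧ i ≤ n - 1) ∧
       (∀ k, 1 ≤ k → k ≤ n - 1 →
         ∑ p ∈ (Finset.Icc 1 (n - 1) ×ˢ Finset.Icc 1 (n - 1)).filter
             (fun p => p.1 ≤ k ∧ k ≤ p.2), m p.1 p.2 = d k)}

lemma chain_aux (f : ℕ → ℕ) (a : ℕ) (h : ∀ i, a ≤ i → f (i + 1) ≤ f i) :
    ∀ m, a ≤ m → f m ≤ f a := by
  intro m hm
  induction m with
  | zero => have : a = 0 := Nat.le_zero.mp hm; simp [this]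
  | succ m ih =>
    rcases Nat.lt_or_ge m a with hlt | hge
    · have : a = m + 1 := by omega
      simp [this]
    · exact le_trans (h m hge) (ih hge)

lemma tele_aux (f : ℕ → ℕ) (a b : ℕ) (hab : a ≤ b)
    (h : ∀ i, a ≤ i → f (i + 1) ≤ f i) :
    ∑ i ∈ Finset.Icc a b, (f i - f (i + 1)) = f a - f (b + 1) := by
  induction b with
  | zero =>
    have : a = 0 := Nat.le_zero.mp hab
    simp [this]
  | succ b ih =>
    rcases Nat.lt_or_ge b a with hlt | hge
    · have ha : a = b + 1 := by omega
      subst ha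
      simp
    · rw [Finset.sum_Icc_succ_top hab, ih hge]
      have h1 : f (b + 1) ≤ f a := chain_aux f a h (b + 1) (by omega)
      have h2 : f (b + 1 + 1) ≤ f (b + 1) := h (b + 1) (by omega)
      omega

lemma filt_aux (n k : ℕ) (hk1 : 1 ≤ k) (hk2 : k ≤ n - 1) :
    (Finset.Icc 1 (n - 1) ×ˢ Finset.Icc 1 (n - 1)).filter
        (fun p => p.1 ≤ k ∧ k ≤ p.2)
      = Finset.Icc 1 k ×ˢ Finset.Icc k (n - 1) := by
  ext ⟨a, b⟩
  simp only [Finset.mem_filter, Finset.mem_product, Finset.mem_Icc]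
  omega

lemma recov_aux (n : ℕ) (dd : ℕ → ℕ → ℕ)
    (h1 : ∀ i j, dd i j ≠ 0 → 1 ≤ j ∧ j ≤ i ∧ i ≤ n - 1)
    (h3 : ∀ j k i, 1 ≤ j → j ≤ k → k ≤ i → i ≤ n - 1 → dd i j ≤ dd k j)
    (i j : ℕ) (hj : 1 ≤ j) (hji : j ≤ i) (hin : i ≤ n - 1) :
    ∑ i' ∈ Finset.Icc i (n - 1), (dd i' j - dd (i' + 1) j) = dd i j := by
  have hmono : ∀ i', i ≤ i' → dd (i' + 1) j ≤ dd i' j := by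
    intro i' hi'
    by_cases hle : i' + 1 ≤ n - 1
    · exact h3 j i' (i' + 1) hj (by omega) (by omega) hle
    · have : dd (i' + 1) j = 0 := by
        by_contra h
        exact hle (h1 _ _ h).2.2
      omega
  rw [tele_aux (fun i' => dd i' j) i (n - 1) hin hmono]
  have : dd (n - 1 + 1) j = 0 := by
    by_contra h
    have := (h1 _ _ h).2.2
    omega
  omega

/-- The map `(d_{ij}) ↦ m`, `m(j,i) = d_{ij} − d_{i+1,j}` (with the
convention `d_{n,j} = 0`), is a well-defined bijection from `A(d)` onto
`K(d)` (Section 2.20, 'univerma', of Braverman–Finkelberg). -/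
theorem stmt_13 (n : ℕ) (hn : 2 ≤ n) (d : ℕ → ℕ) :
    Set.BijOn (fun dd : ℕ → ℕ → ℕ => fun j i => dd i j - dd (i + 1) j)
      (laumonFixedSet n d) (kostantSet n d) := by
  refine ⟨?_, ?_, ?_⟩
  · -- MapsTo
    rintro dd ⟨h1, h2, h3⟩
    refine ⟨?_, ?_⟩
    · intro j i hm
      have hm' : dd i j - dd (i + 1) j ≠ 0 := hm
      exact h1 i j (by omega)
    · intro k hk1 hk2
      rw [filt_aux n k hk1 hk2, Finset.sum_product]
      have key : ∀ j ∈ Finset.Icc 1 k,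
          ∑ i ∈ Finset.Icc k (n - 1), (dd i j - dd (i + 1) j) = dd k j := by
        intro j hj
        simp only [Finset.mem_Icc] at hj
        exact recov_aux n dd h1 h3 k j hj.1 hj.2 hk2
      rw [Finset.sum_congr rfl key]
      exact h2 k hk1 hk2
  · -- InjOn
    rintro dd ⟨h1, h2, h3⟩ dd' ⟨h1', h2', h3'⟩ heq
    funext i j
    by_cases hij : 1 ≤ j ∧ j ≤ i ∧ i ≤ n - 1
    · have e1 := recov_aux n dd h1 h3 i j hij.1 hij.2.1 hij.2.2
      have e1' := recov_aux n dd' h1' h3' i j hij.1 hij.2.1 hij.2.2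
      rw [← e1, ← e1']
      refine Finset.sum_congr rfl fun i' _ => ?_
      have heq2 : (fun j i => dd i j - dd (i + 1) j)
          = fun j i => dd' i j - dd' (i + 1) j := heq
      exact congrFun (congrFun heq2 j) i'
    · have z1 : dd i j = 0 := by
        by_contra h
        exact hij (h1 i j h)
      have z2 : dd' i j = 0 := by
        by_contra h
        exact hij (h1' i j h)
      rw [z1, z2]
  · -- SurjOn
    intro m hm
    obtain ⟨hs, hk⟩ := hm
    refine ⟨fun i j =>
      if 1 ≤ j ∧ j ≤ i ∧ i ≤ n - 1 then ∑ i' ∈ Finset.Icc i (n - 1), m j i'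
      else 0, ⟨?_, ?_, ?_⟩, ?_⟩
    · intro i j h
      by_contra hc
      exact h (if_neg hc)
    · intro i hi1 hi2
      have key : ∀ j ∈ Finset.Icc 1 i,
          (if 1 ≤ j ∧ j ≤ i ∧ i ≤ n - 1 then
            ∑ i' ∈ Finset.Icc i (n - 1), m j i' else 0)
          = ∑ i' ∈ Finset.Icc i (n - 1), m j i' := by
        intro j hj
        simp only [Finset.mem_Icc] at hj
        exact if_pos ⟨hj.1, hj.2, hi2⟩
      rw [Finset.sum_congr rfl key, ← hk i hi1 hi2, filt_aux n i hi1 hi2,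
        Finset.sum_product]
    · intro j k i hj hjk hki hin
      show (if 1 ≤ j ∧ j ≤ i ∧ i ≤ n - 1 then
              ∑ i' ∈ Finset.Icc i (n - 1), m j i' else 0)
          ≤ (if 1 ≤ j ∧ j ≤ k ∧ k ≤ n - 1 then
              ∑ i' ∈ Finset.Icc k (n - 1), m j i' else 0)
      rw [if_pos ⟨hj, by omega, hin⟩, if_pos ⟨hj, by omega, by omega⟩]
      exact Finset.sum_le_sum_of_subset (Finset.Icc_subset_Icc hki le_rfl)
    · funext j i
      show (if 1 ≤ j ∧ j ≤ i ∧ i ≤ n - 1 then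
              ∑ i' ∈ Finset.Icc i (n - 1), m j i' else 0)
            - (if 1 ≤ j ∧ j ≤ i + 1 ∧ i + 1 ≤ n - 1 then
              ∑ i' ∈ Finset.Icc (i + 1) (n - 1), m j i' else 0) = m j i
      by_cases hij : 1 ≤ j ∧ j ≤ i ∧ i ≤ n - 1
      · rw [if_pos hij]
        by_cases hi : i + 1 ≤ n - 1
        · rw [if_pos ⟨hij.1, by omega, hi⟩]
          have hins : Finset.Icc i (n - 1) = insert i (Finset.Icc (i + 1) (n - 1)) := by
            ext x
            simp only [Finset.mem_Icc, Finset.mem_insert]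
            omega
          rw [hins, Finset.sum_insert (by simp only [Finset.mem_Icc]; omega)]
          omega
        · have hieq : i = n - 1 := by omega
          rw [if_neg (by omega : ¬(1 ≤ j ∧ j ≤ i + 1 ∧ i + 1 ≤ n - 1))]
          rw [hieq, Finset.Icc_self, Finset.sum_singleton, Nat.sub_zero, ← hieq]
      · rw [if_neg hij]
        have : m j i = 0 := by
          by_contra h
          exact hij (hs j i h)
        omega
end
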